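/- arXiv:1504.04900 — 4 statements merged into one kernel-verified Lean document; each statement's English description precedes it below -/
import Mathlib

section
/- Let H1, H2 be Hilbert spaces, K : H1 → H2 bounded linear, 0 < δ < 1/√2, z ∈ H2 with z ≠ 0, and α > 0. Let φ_α = (αI + K*K)⁻¹ K* z be the Tikhonov regularized solution. If ‖Kφ_α − z‖ ≤ δ‖z‖, then α ≤ 4δ‖K*‖². -/
set_option maxHeartbeats 1000000 in
/-- If `φα` is the Tikhonov solution, i.e. `α φα + K*K φα = K* z`
(equivalently `φα = (αI + K*K)⁻¹ K* z`), and the relative discrepancy is `≤ δ`,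
then `α ≤ 4δ‖K*‖²`. -/
theorem stmt1 {H1 H2 : Type*}
    [NormedAddCommGroup H1] [InnerProductSpace ℂ H1] [CompleteSpace H1]
    [NormedAddCommGroup H2] [InnerProductSpace ℂ H2] [CompleteSpace H2]
    (K : H1 →L[ℂ] H2) (δ : ℝ) (hδ : 0 < δ) (hδ' : δ < 1 / Real.sqrt 2)
    (z : H2) (hz : z ≠ 0) (α : ℝ) (hα : 0 < α) (φα : H1)
    (hφα : (α : ℂ) • φα + (ContinuousLinearMap.adjoint K) (K φα)
        = (ContinuousLinearMap.adjoint K) z)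
    (h : ‖K φα - z‖ ≤ δ * ‖z‖) :
    α ≤ 4 * δ * ‖ContinuousLinearMap.adjoint K‖ ^ 2 := by
  set K' := ContinuousLinearMap.adjoint K with hK'
  have hz' : 0 < ‖z‖ := norm_pos_iff.mpr hz
  -- δ < 3/4
  have hs : (4:ℝ)/3 < Real.sqrt 2 := by
    nlinarith [Real.sq_sqrt (by norm_num : (0:ℝ) ≤ 2), Real.sqrt_nonneg 2]
  have hδ34 : δ < 3/4 := by
    have h1 : (1:ℝ) / Real.sqrt 2 < 3/4 := by
      rw [div_lt_div_iff₀ (by positivity) (by norm_num)]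
      linarith
    linarith
  -- key identity
  have h1 : (α : ℂ) • φα = K' (z - K φα) := by
    rw [map_sub]
    exact eq_sub_of_add_eq hφα
  have h2 : ‖(α : ℂ) • φα‖ = α * ‖φα‖ := by
    rw [norm_smul, Complex.norm_real, Real.norm_of_nonneg hα.le]
  have h3 : α * ‖φα‖ ≤ ‖K'‖ * (δ * ‖z‖) := by
    rw [← h2, h1]
    calc ‖K' (z - K φα)‖ ≤ ‖K'‖ * ‖z - K φα‖ := K'.le_opNorm _
      _ ≤ ‖K'‖ * (δ * ‖z‖) := by
          gcongr
          rw [norm_sub_rev]; exact h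
  have h4 : (1 - δ) * ‖z‖ ≤ ‖K φα‖ := by
    have h0 := norm_sub_norm_le z (K φα)
    rw [norm_sub_rev] at h
    nlinarith
  have h5 : ‖K φα‖ ≤ ‖K'‖ * ‖φα‖ := by
    have : ‖K‖ = ‖K'‖ := (LinearIsometryEquiv.norm_map ContinuousLinearMap.adjoint K).symm
    calc ‖K φα‖ ≤ ‖K‖ * ‖φα‖ := K.le_opNorm _
      _ = ‖K'‖ * ‖φα‖ := by rw [this]
  have h6 : (1 - δ) * ‖z‖ ≤ ‖K'‖ * ‖φα‖ := le_trans h4 h5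
  have hφ : 0 < ‖φα‖ := by
    by_contra hc
    push_neg at hc
    have : ‖φα‖ = 0 := le_antisymm hc (norm_nonneg _)
    rw [this, mul_zero] at h6
    nlinarith
  have h7 : ‖z‖ ≤ 4 * (‖K'‖ * ‖φα‖) := by nlinarith
  have h8 := mul_le_mul_of_nonneg_left h7 (by positivity : (0:ℝ) ≤ δ * ‖K'‖)
  nlinarith [h3, h8, hφ]
end

section
/- Let H, H' be Hilbert spaces, K : H → H' a compact injective linear operator with dense range. Then for every f ∈ H', the Tikhonov approximations φ_α = (αI + K*K)⁻¹K*f satisfy ‖Kφ_α − f‖ → 0 as α → 0⁺. -/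
/-!
The normal equation `α φ_α + K* K φ_α = K* f` says that `φ_α` minimizes the Tikhonov functional
`‖K ψ - f‖² + α ‖ψ‖²`; comparing with any fixed `ψ` gives `‖K φ_α - f‖ ≤ ‖K ψ - f‖ + √α ‖ψ‖`.
Since `K` has dense range, `‖K ψ - f‖` can be made arbitrarily small, and then `√α ‖ψ‖ → 0`.
-/

open Filter Topology

namespace ContinuousLinearMap

variable {𝕜 E F : Type*} [RCLike 𝕜]
  [NormedAddCommGroup E] [InnerProductSpace 𝕜 E] [CompleteSpace E]
  [NormedAddCommGroup F] [InnerProductSpace 𝕜 F] [CompleteSpace F]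

noncomputable def tikhonovFunctional (K : E →L[𝕜] F) (f : F) (α : ℝ) (ψ : E) : ℝ :=
  ‖K ψ - f‖ ^ 2 + α * ‖ψ‖ ^ 2

theorem tikhonovFunctional_eq_of_normal_eq (K : E →L[𝕜] F) (f : F) {α : ℝ} {φ : E}
    (hφ : (α : 𝕜) • φ + adjoint K (K φ) = adjoint K f) (ψ : E) :
    tikhonovFunctional K f α ψ
      = tikhonovFunctional K f α φ + ‖K (ψ - φ)‖ ^ 2 + α * ‖ψ - φ‖ ^ 2 := by
  set e := ψ - φ
  have hcross : RCLike.re (inner 𝕜 (K φ - f) (K e)) + α * RCLike.re (inner 𝕜 φ e) = 0 := by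
    have hgrad : adjoint K (K φ - f) + (α : 𝕜) • φ = 0 := by
      rw [map_sub, ← hφ]
      abel
    have hα : α * RCLike.re (inner 𝕜 φ e) = RCLike.re (inner 𝕜 ((α : 𝕜) • φ) e) := by
      rw [inner_smul_left, RCLike.conj_ofReal, RCLike.re_ofReal_mul]
    rw [← adjoint_inner_left, hα, ← map_add, ← inner_add_left, hgrad, inner_zero_left, map_zero]
  have hres : K ψ - f = (K φ - f) + K e := by simp [e]
  have hψ : ψ = φ + e := by simp [e]
  unfold tikhonovFunctional
  rw [hres, norm_add_sq (𝕜 := 𝕜), hψ, norm_add_sq (𝕜 := 𝕜)]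
  linear_combination 2 * hcross

theorem tikhonovFunctional_le_of_normal_eq (K : E →L[𝕜] F) (f : F) {α : ℝ} (hα : 0 ≤ α) {φ : E}
    (hφ : (α : 𝕜) • φ + adjoint K (K φ) = adjoint K f) (ψ : E) :
    tikhonovFunctional K f α φ ≤ tikhonovFunctional K f α ψ := by
  rw [tikhonovFunctional_eq_of_normal_eq K f hφ ψ]
  nlinarith [sq_nonneg ‖K (ψ - φ)‖, sq_nonneg ‖ψ - φ‖]

theorem norm_sub_le_of_normal_eq (K : E →L[𝕜] F) (f : F) {α : ℝ} (hα : 0 ≤ α) {φ : E}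
    (hφ : (α : 𝕜) • φ + adjoint K (K φ) = adjoint K f) (ψ : E) :
    ‖K φ - f‖ ≤ ‖K ψ - f‖ + √α * ‖ψ‖ := by
  have hmin := tikhonovFunctional_le_of_normal_eq K f hα hφ ψ
  unfold tikhonovFunctional at hmin
  have hsq : ‖K φ - f‖ ^ 2 ≤ (‖K ψ - f‖ + √α * ‖ψ‖) ^ 2 := by
    have hb : (√α * ‖ψ‖) ^ 2 = α * ‖ψ‖ ^ 2 := by rw [mul_pow, Real.sq_sqrt hα]
    nlinarith [mul_nonneg hα (sq_nonneg ‖φ‖),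
      mul_nonneg (norm_nonneg (K ψ - f)) (mul_nonneg (Real.sqrt_nonneg α) (norm_nonneg ψ))]
  exact (pow_le_pow_iff_left₀ (norm_nonneg _) (by positivity) two_ne_zero).1 hsq

end ContinuousLinearMap

theorem stmt8_general {H H' : Type*}
    [NormedAddCommGroup H] [InnerProductSpace ℂ H] [CompleteSpace H]
    [NormedAddCommGroup H'] [InnerProductSpace ℂ H'] [CompleteSpace H']
    (K : H →L[ℂ] H') (hdense : DenseRange K)
    (f : H') (φ : ℝ → H)
    (hφ : ∀ α : ℝ, 0 < α →
      (α : ℂ) • φ α + (ContinuousLinearMap.adjoint K) (K (φ α))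
        = (ContinuousLinearMap.adjoint K) f) :
    Filter.Tendsto (fun α => ‖K (φ α) - f‖) (nhdsWithin 0 (Set.Ioi 0))
      (nhds 0) := by
  rw [Metric.tendsto_nhds]
  intro ε hε
  obtain ⟨ψ, hψ⟩ := hdense.exists_dist_lt f (half_pos hε)
  rw [dist_comm, dist_eq_norm] at hψ
  have hpenalty : Tendsto (fun α : ℝ => √α * ‖ψ‖) (𝓝[>] 0) (𝓝 0) := by
    apply tendsto_nhdsWithin_of_tendsto_nhds
    simpa using (Real.continuous_sqrt.tendsto 0).mul_const ‖ψ‖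
  filter_upwards [self_mem_nhdsWithin, hpenalty (Iio_mem_nhds (half_pos hε))]
    with α (hα : 0 < α) (hsmall : √α * ‖ψ‖ < ε / 2)
  rw [Real.dist_0_eq_abs, abs_of_nonneg (norm_nonneg _)]
  linarith [K.norm_sub_le_of_normal_eq f hα.le (hφ α hα) ψ]

/-- for `K` compact, injective, with dense range, the Tikhonov
approximations `φ_α = (αI + K*K)⁻¹K*f` (characterized by the normal equation)
satisfy `‖Kφ_α − f‖ → 0` as `α → 0⁺`. -/
theorem stmt8 {H H' : Type*}
    [NormedAddCommGroup H] [InnerProductSpace ℂ H] [CompleteSpace H]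
    [NormedAddCommGroup H'] [InnerProductSpace ℂ H'] [CompleteSpace H']
    (K : H →L[ℂ] H') (hcpt : IsCompactOperator K)
    (hinj : Function.Injective K) (hdense : DenseRange K)
    (f : H') (φ : ℝ → H)
    (hφ : ∀ α : ℝ, 0 < α →
      (α : ℂ) • φ α + (ContinuousLinearMap.adjoint K) (K (φ α))
        = (ContinuousLinearMap.adjoint K) f) :
    Filter.Tendsto (fun α => ‖K (φ α) - f‖) (nhdsWithin 0 (Set.Ioi 0))
      (nhds 0) :=
  stmt8_general K hdense f φ hφ
end

section
/- Let H, H' be Hilbert spaces, K : H → H' a compact linear operator, and for α > 0 let R_α := (K*K + αI)⁻¹K*. Then for every z ∈ H, ‖K R_α K z − K z‖ ≤ (√α / 2) ‖z‖. -/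
/-!
The residual `u = R (K z) - z` solves `K* K u + α u = -α z`. Pairing with `u` gives
`‖K u‖² + α ‖u‖² = -α Re ⟪u, z⟫ ≤ α ‖u‖ ‖z‖`, hence `‖K u‖² ≤ α (‖u‖ ‖z‖ - ‖u‖²) ≤ α ‖z‖² / 4`.
-/

open ContinuousLinearMap RCLike

theorem le_sqrt_div_two_mul_of_sq_add_mul_sq_le {α a b c : ℝ} (hα : 0 ≤ α) (hc : 0 ≤ c)
    (h : b ^ 2 + α * a ^ 2 ≤ α * (a * c)) : b ≤ √α / 2 * c := by
  have hb2 : b ^ 2 ≤ (√α / 2 * c) ^ 2 := by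
    rw [mul_pow, div_pow, Real.sq_sqrt hα]
    nlinarith [mul_nonneg hα (sq_nonneg (a - c / 2))]
  exact (abs_le_of_sq_le_sq' hb2 (by positivity)).2

section

variable {𝕜 E F : Type*} [RCLike 𝕜]
  [NormedAddCommGroup E] [InnerProductSpace 𝕜 E] [CompleteSpace E]
  [NormedAddCommGroup F] [InnerProductSpace 𝕜 F] [CompleteSpace F]

theorem norm_apply_le_of_adjoint_apply_add_smul_eq (T : E →L[𝕜] F) {α : ℝ} (hα : 0 ≤ α)
    {u z : E} (h : adjoint T (T u) + (α : 𝕜) • u = -(α : 𝕜) • z) :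
    ‖T u‖ ≤ √α / 2 * ‖z‖ := by
  have hre : ‖T u‖ ^ 2 + α * ‖u‖ ^ 2 = -α * re (inner 𝕜 u z) := by
    simpa only [inner_add_right, inner_smul_right, adjoint_inner_right, map_add,
      ← ofReal_neg, re_ofReal_mul, inner_self_eq_norm_sq] using
      congrArg (fun v => re (inner 𝕜 u v)) h
  refine le_sqrt_div_two_mul_of_sq_add_mul_sq_le (a := ‖u‖) hα (norm_nonneg z) ?_
  rw [hre, neg_mul, ← mul_neg, ← map_neg, ← inner_neg_right]
  exact mul_le_mul_of_nonneg_left (re_inner_le_norm u (-z) |>.trans_eq (by rw [norm_neg])) hα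

end

theorem stmt10_general {H H' : Type*}
    [NormedAddCommGroup H] [InnerProductSpace ℂ H] [CompleteSpace H]
    [NormedAddCommGroup H'] [InnerProductSpace ℂ H'] [CompleteSpace H']
    (K : H →L[ℂ] H')
    (α : ℝ) (hα : 0 < α) (R : H' →L[ℂ] H)
    (hR : ∀ z : H', (ContinuousLinearMap.adjoint K) (K (R z)) + (α : ℂ) • R z
        = (ContinuousLinearMap.adjoint K) z) :
    ∀ z : H, ‖K (R (K z)) - K z‖ ≤ (Real.sqrt α / 2) * ‖z‖ := by
  intro z
  have hresidual :
      adjoint K (K (R (K z) - z)) + (α : ℂ) • (R (K z) - z) = -(α : ℂ) • z := by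
    rw [map_sub, map_sub, smul_sub, sub_add_sub_comm, hR, neg_smul]
    abel
  rw [← map_sub]
  exact norm_apply_le_of_adjoint_apply_add_smul_eq K hα.le hresidual

/-- for `K` compact and `R_α = (K*K + αI)⁻¹K*`, one has
`‖K R_α K z − K z‖ ≤ (√α / 2)‖z‖` for every `z`. -/
theorem stmt10 {H H' : Type*}
    [NormedAddCommGroup H] [InnerProductSpace ℂ H] [CompleteSpace H]
    [NormedAddCommGroup H'] [InnerProductSpace ℂ H'] [CompleteSpace H']
    (K : H →L[ℂ] H') (hcpt : IsCompactOperator K)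
    (α : ℝ) (hα : 0 < α) (R : H' →L[ℂ] H)
    (hR : ∀ z : H', (ContinuousLinearMap.adjoint K) (K (R z)) + (α : ℂ) • R z
        = (ContinuousLinearMap.adjoint K) z) :
    ∀ z : H, ‖K (R (K z)) - K z‖ ≤ (Real.sqrt α / 2) * ‖z‖ :=
  stmt10_general K α hα R hR
end

section
/- Let α : (0, ε₀) → (0, ∞) be differentiable and α₀ > 0 with α(ε) → α₀ as ε → 0⁺, and suppose |α'(ε)| α(ε)^{3/2} ≤ Cδ² for all ε ∈ (0, ε₀). If moreover α₀ ≥ c·δ for constants c, C > 0 and ε < δ < 1, then |α(ε)/α₀ − 1| ≤ C'√ε for a constant C' depending only on c and C. -/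
/-!
Along `(0, ε₀)` the function `α ^ (5/2)` has derivative `(5/2) α' α ^ (3/2)`, bounded by
`(5/2) C δ²`, so the mean value theorem and the limit at `0⁺` give
`|α(ε)^(5/2) - α₀^(5/2)| ≤ (5/2) C δ² ε`. Dividing by `α₀^(5/2) ≥ (cδ)^(5/2)` and using
`|x - 1| ≤ |x^(5/2) - 1|` for `x ≥ 0`, this yields `|α(ε)/α₀ - 1| ≤ (5/2) C c^(-5/2) ε/√δ`,
and `ε/√δ ≤ √ε` because `ε < δ`.
-/

open Real Filter Set Topology

theorem abs_sub_one_le_abs_rpow_sub_one {x p : ℝ} (hx : 0 ≤ x) (hp : 1 ≤ p) :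
    |x - 1| ≤ |x ^ p - 1| := by
  rcases le_total x 1 with hx1 | hx1
  · have := rpow_le_self_of_le_one hx hx1 hp
    rw [abs_of_nonpos (by linarith), abs_of_nonpos (by linarith)]
    linarith
  · have := self_le_rpow_of_one_le hx1 hp
    rw [abs_of_nonneg (by linarith), abs_of_nonneg (by linarith)]
    linarith

theorem abs_div_sub_one_le_abs_rpow_sub_rpow_div {x y p : ℝ} (hx : 0 ≤ x) (hy : 0 < y)
    (hp : 1 ≤ p) : |x / y - 1| ≤ |x ^ p - y ^ p| / y ^ p := by
  have hyp : 0 < y ^ p := rpow_pos_of_pos hy p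
  calc |x / y - 1| ≤ |(x / y) ^ p - 1| :=
        abs_sub_one_le_abs_rpow_sub_one (div_nonneg hx hy.le) hp
    _ = |x ^ p - y ^ p| / y ^ p := by
        rw [div_rpow hx hy.le, ← div_self hyp.ne', ← sub_div, abs_div, abs_of_pos hyp]

theorem norm_sub_le_mul_of_tendsto_nhdsGT_zero {E : Type*} [NormedAddCommGroup E]
    [NormedSpace ℝ E] {f : ℝ → E} {a K : ℝ} {L : E}
    (hf : ∀ x ∈ Ioo 0 a, DifferentiableAt ℝ f x) (hbound : ∀ x ∈ Ioo 0 a, ‖deriv f x‖ ≤ K)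
    (hlim : Tendsto f (𝓝[>] 0) (𝓝 L)) {x : ℝ} (hx : x ∈ Ioo 0 a) :
    ‖f x - L‖ ≤ K * x := by
  have hmvt : ∀ t ∈ Ioo 0 x, ‖f x - f t‖ ≤ K * (x - t) := by
    intro t ht
    have ht' : t ∈ Ioo 0 a := ⟨ht.1, ht.2.trans hx.2⟩
    simpa [Real.norm_eq_abs, abs_of_pos (sub_pos.2 ht.2)] using
      (convex_Ioo 0 a).norm_image_sub_le_of_norm_deriv_le hf hbound ht' hx
  have hlhs : Tendsto (fun t => ‖f x - f t‖) (𝓝[>] 0) (𝓝 ‖f x - L‖) :=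
    (tendsto_const_nhds.sub hlim).norm
  have hrhs : Tendsto (fun t => K * (x - t)) (𝓝[>] 0) (𝓝 (K * x)) := by
    have : Tendsto (fun t : ℝ => K * (x - t)) (𝓝 0) (𝓝 (K * (x - 0))) :=
      (continuous_const.mul (continuous_const.sub continuous_id)).tendsto 0
    simpa using this.mono_left nhdsWithin_le_nhds
  exact le_of_tendsto_of_tendsto hlhs hrhs <|
    eventually_of_mem (Ioo_mem_nhdsGT hx.1) hmvt

theorem abs_rpow_sub_rpow_le_of_abs_deriv_mul_rpow_le {α : ℝ → ℝ} {a α₀ p M : ℝ}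
    (hα : ∀ x ∈ Ioo 0 a, DifferentiableAt ℝ α x ∧ 0 < α x) (hα₀ : 0 < α₀)
    (hlim : Tendsto α (𝓝[>] 0) (𝓝 α₀)) (hp : 0 ≤ p)
    (hbound : ∀ x ∈ Ioo 0 a, |deriv α x| * α x ^ (p - 1) ≤ M) {x : ℝ} (hx : x ∈ Ioo 0 a) :
    |α x ^ p - α₀ ^ p| ≤ p * M * x := by
  have hderiv : ∀ y ∈ Ioo 0 a,
      HasDerivAt (fun t => α t ^ p) (deriv α y * p * α y ^ (p - 1)) y := fun y hy =>
    (hα y hy).1.hasDerivAt.rpow_const (Or.inl (hα y hy).2.ne')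
  have hbound' : ∀ y ∈ Ioo 0 a, ‖deriv (fun t => α t ^ p) y‖ ≤ p * M := by
    intro y hy
    have hpos : 0 < α y ^ (p - 1) := rpow_pos_of_pos (hα y hy).2 _
    rw [(hderiv y hy).deriv, norm_eq_abs, abs_mul, abs_mul, abs_of_nonneg hp, abs_of_pos hpos]
    calc |deriv α y| * p * α y ^ (p - 1) = p * (|deriv α y| * α y ^ (p - 1)) := by ring
      _ ≤ p * M := mul_le_mul_of_nonneg_left (hbound y hy) hp
  have hlim' : Tendsto (fun t => α t ^ p) (𝓝[>] 0) (𝓝 (α₀ ^ p)) :=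
    (continuousAt_rpow_const α₀ p (Or.inl hα₀.ne')).tendsto.comp hlim
  simpa [norm_eq_abs] using norm_sub_le_mul_of_tendsto_nhdsGT_zero
    (fun y hy => (hderiv y hy).differentiableAt) hbound' hlim' hx

theorem sq_mul_le_rpow_mul_sqrt {ε δ : ℝ} (hε : 0 ≤ ε) (hεδ : ε ≤ δ) :
    δ ^ 2 * ε ≤ δ ^ ((5 : ℝ) / 2) * √ε := by
  have hδ : 0 ≤ δ := hε.trans hεδ
  have hsplit : δ ^ ((5 : ℝ) / 2) = δ ^ 2 * √δ := by
    rw [sqrt_eq_rpow, ← rpow_natCast, ← rpow_add' hδ (by norm_num)]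
    norm_num
  calc δ ^ 2 * ε = δ ^ 2 * (√ε * √ε) := by rw [mul_self_sqrt hε]
    _ ≤ δ ^ 2 * (√δ * √ε) := by gcongr
    _ = δ ^ ((5 : ℝ) / 2) * √ε := by rw [hsplit, mul_assoc]

/-- reduction step of Corollary 3.7: from the differential
inequality `|α'(ε)| α(ε)^{3/2} ≤ Cδ²`, `α(ε) → α₀` as `ε → 0⁺`, `α₀ ≥ cδ`
and `ε < δ < 1`, one gets `|α(ε)/α₀ − 1| ≤ C'√ε` with `C'` depending only
on `c` and `C`. -/
theorem stmt15 (c C : ℝ) (hc : 0 < c) (hC : 0 < C) :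
    ∃ C' : ℝ, 0 < C' ∧
      ∀ (ε₀ α₀ δ : ℝ) (α : ℝ → ℝ), 0 < ε₀ → 0 < α₀ →
        (∀ ε ∈ Set.Ioo (0 : ℝ) ε₀, DifferentiableAt ℝ α ε ∧ 0 < α ε) →
        Filter.Tendsto α (nhdsWithin 0 (Set.Ioi 0)) (nhds α₀) →
        (∀ ε ∈ Set.Ioo (0 : ℝ) ε₀,
          |deriv α ε| * (α ε) ^ ((3 : ℝ) / 2) ≤ C * δ ^ 2) →
        c * δ ≤ α₀ → 0 < δ → δ < 1 →
        ∀ ε ∈ Set.Ioo (0 : ℝ) ε₀, ε < δ →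
          |α ε / α₀ - 1| ≤ C' * Real.sqrt ε := by
  refine ⟨5 / 2 * C / c ^ ((5 : ℝ) / 2), by positivity, ?_⟩
  intro ε₀ α₀ δ α _ hα₀ hα hlim hbound hcδ hδ _ ε hε hεδ
  have hpow : |α ε ^ ((5 : ℝ) / 2) - α₀ ^ ((5 : ℝ) / 2)| ≤ 5 / 2 * (C * δ ^ 2) * ε :=
    abs_rpow_sub_rpow_le_of_abs_deriv_mul_rpow_le hα hα₀ hlim (by norm_num)
      (by convert hbound using 5; norm_num) hε
  have hcδpow : c ^ ((5 : ℝ) / 2) * δ ^ ((5 : ℝ) / 2) ≤ α₀ ^ ((5 : ℝ) / 2) := by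
    rw [← mul_rpow hc.le hδ.le]
    exact rpow_le_rpow (by positivity) hcδ (by norm_num)
  calc |α ε / α₀ - 1|
      ≤ |α ε ^ ((5 : ℝ) / 2) - α₀ ^ ((5 : ℝ) / 2)| / α₀ ^ ((5 : ℝ) / 2) :=
        abs_div_sub_one_le_abs_rpow_sub_rpow_div (hα ε hε).2.le hα₀ (by norm_num)
    _ ≤ 5 / 2 * (C * δ ^ 2) * ε / (c ^ ((5 : ℝ) / 2) * δ ^ ((5 : ℝ) / 2)) := by
        have := hε.1
        gcongr
    _ = 5 / 2 * C / c ^ ((5 : ℝ) / 2) * (δ ^ 2 * ε / δ ^ ((5 : ℝ) / 2)) := by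
        field_simp
    _ ≤ 5 / 2 * C / c ^ ((5 : ℝ) / 2) * √ε := by
        gcongr
        rw [div_le_iff₀' (by positivity)]
        exact sq_mul_le_rpow_mul_sqrt hε.1.le hεδ.le
end
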